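/- arXiv:1806.08392 — 4 statements merged into one kernel-verified Lean document; each statement's English description precedes it below -/
import Mathlib

section
/- For each integer $k \geq 2$, the function $\gamma(k,\alpha) = \alpha \cdot \frac{(1+\alpha)^{k-1} - (1-\alpha)^{k-1}}{(1+\alpha)^k + (1-\alpha)^k}$ is strictly increasing in $\alpha$ on the interval $(0,1)$. -/
/-!
Substitute `t = (1 - α) / (1 + α)`, which decreases from `1` to `0` as `α` runs over `(0,1)`.
Dividing numerator and denominator by `(1 + α)^k` turns `γ(k, α)` into
`(1 - (t + t^(k-1)) / (1 + t^k)) / 2`, so it suffices that `t ↦ (t + t^(k-1)) / (1 + t^k)`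
is strictly increasing on `(0,1)`.
-/

open Set

lemma strictMonoOn_add_pow_div_one_add_pow_succ {m : ℕ} (hm : 1 ≤ m) :
    StrictMonoOn (fun t : ℝ => (t + t ^ m) / (1 + t ^ (m + 1))) (Ioo 0 1) := by
  rintro s ⟨hs, -⟩ t ⟨ht0, ht⟩ hst
  have hsm : s ^ m < t ^ m := pow_lt_pow_left₀ hst hs.le (by omega)
  have hst1 : s * t < 1 := by nlinarith
  have hstm : s ^ m * t ^ m < 1 := by
    rw [← mul_pow]
    exact pow_lt_one₀ (by positivity) hst1 (by omega)
  rw [div_lt_div_iff₀ (by positivity) (by positivity), pow_succ, pow_succ]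
  -- the cross-multiplied difference is `(t - s)(1 - sᵐtᵐ) + (tᵐ - sᵐ)(1 - st)`
  nlinarith [mul_pos (sub_pos.2 hst) (sub_pos.2 hstm), mul_pos (sub_pos.2 hsm) (sub_pos.2 hst1)]

lemma strictAntiOn_one_sub_div_one_add : StrictAntiOn (fun x : ℝ => (1 - x) / (1 + x)) (Ioi (-1)) := by
  intro a ha b hb hab
  rw [mem_Ioi] at ha hb
  rw [div_lt_div_iff₀ (by linarith) (by linarith)]
  nlinarith

lemma mapsTo_one_sub_div_one_add : MapsTo (fun x : ℝ => (1 - x) / (1 + x)) (Ioo 0 1) (Ioo 0 1) := by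
  rintro x ⟨hx0, hx1⟩
  exact ⟨div_pos (by linarith) (by linarith), (div_lt_one (by linarith)).2 (by linarith)⟩

lemma mul_sub_pow_div_add_pow_eq {m : ℕ} {x : ℝ} (hx : x ∈ Ioo (-1) 1) :
    x * ((1 + x) ^ m - (1 - x) ^ m) / ((1 + x) ^ (m + 1) + (1 - x) ^ (m + 1)) =
      (1 - ((1 - x) / (1 + x) + ((1 - x) / (1 + x)) ^ m) /
        (1 + ((1 - x) / (1 + x)) ^ (m + 1))) / 2 := by
  obtain ⟨hx0, hx1⟩ := hx
  have hu : (0 : ℝ) < 1 + x := by linarith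
  have hv : (0 : ℝ) < 1 - x := by linarith
  rw [div_pow, div_pow]
  field_simp
  ring

/-- For each integer `k ≥ 2`, the function
`γ(k,α) = α ((1+α)^(k-1) - (1-α)^(k-1)) / ((1+α)^k + (1-α)^k)`
is strictly increasing in `α` on `(0,1)`. -/
theorem stmt5 (k : ℕ) (hk : 2 ≤ k) :
    StrictMonoOn
      (fun α : ℝ =>
        α * ((1 + α) ^ (k - 1) - (1 - α) ^ (k - 1)) / ((1 + α) ^ k + (1 - α) ^ k))
      (Set.Ioo (0 : ℝ) 1) := by
  obtain ⟨m, rfl⟩ : ∃ m, k = m + 1 := ⟨k - 1, by omega⟩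
  have hanti := (strictMonoOn_add_pow_div_one_add_pow_succ (by omega : 1 ≤ m)).comp_strictAntiOn
    (strictAntiOn_one_sub_div_one_add.mono (Ioo_subset_Ioi_self.trans (Ioi_subset_Ioi (by norm_num))))
    mapsTo_one_sub_div_one_add
  intro a ha b hb hab
  have hlt := hanti ha hb hab
  simp only [Function.comp_apply, Nat.add_sub_cancel] at hlt ⊢
  rw [mul_sub_pow_div_add_pow_eq (Ioo_subset_Ioo_left (by norm_num) ha),
    mul_sub_pow_div_add_pow_eq (Ioo_subset_Ioo_left (by norm_num) hb)]
  linarith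
end

section
/- Fix an integer $k \geq 2$ and $\gamma_0 \in (0,1/2)$, and set $\epsilon = 2\gamma_0 \cdot \frac{(1-2\gamma_0)^{k-1}}{1 - (1-2\gamma_0)^{k-1}}$. Then $\gamma\left(k, \frac{\gamma_0 + \epsilon}{1-\gamma_0}\right) \geq \gamma_0$, where $\gamma(k,\alpha) = \alpha \cdot \frac{(1+\alpha)^{k-1} - (1-\alpha)^{k-1}}{(1+\alpha)^k + (1-\alpha)^k}$. -/
/-! With `α = (γ₀ + ε)/(1 - γ₀)` one has `1 + α = (1 + ε)/(1 - γ₀)` and `1 - α = (1 - 2γ₀ - ε)/(1 - γ₀)`,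
and `γ(k, ·)` is homogeneous of degree zero in `(α, 1 + α, 1 - α)`, so the claim becomes
`ε (1 + ε)^(k-1) ≥ (2γ₀ + ε)(1 - 2γ₀ - ε)^(k-1)`. Writing `t = (1 - 2γ₀)^(k-1)`, the choice of `ε`
means exactly `ε = (2γ₀ + ε) t`, while `0 ≤ 1 - 2γ₀ - ε ≤ (1 - 2γ₀)(1 + ε)` gives
`(1 - 2γ₀ - ε)^(k-1) ≤ t (1 + ε)^(k-1)`. -/

lemma mul_sub_pow_div_add_pow_div_homogeneous (a b d c : ℝ) (m : ℕ) (hc : c ≠ 0) :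
    a / c * ((b / c) ^ m - (d / c) ^ m) / ((b / c) ^ (m + 1) + (d / c) ^ (m + 1)) =
      a * (b ^ m - d ^ m) / (b ^ (m + 1) + d ^ (m + 1)) := by
  rw [div_pow, div_pow, div_pow, div_pow, div_sub_div_same, div_mul_div_comm, ← add_div,
    ← pow_succ', div_div_div_cancel_right₀ (pow_ne_zero _ hc)]

lemma eq_add_mul_of_eq_mul_div_one_sub {x ε t : ℝ} (ht : t < 1) (hε : ε = x * (t / (1 - t))) :
    ε = (x + ε) * t := by
  have : 1 - t ≠ 0 := by linarith
  rw [hε]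
  field_simp
  ring

lemma sub_pow_le_pow_mul_one_add_pow {q ε : ℝ} (hq : 0 ≤ q) (hε : 0 ≤ ε) (hεq : ε ≤ q) (m : ℕ) :
    (q - ε) ^ m ≤ q ^ m * (1 + ε) ^ m := by
  rw [← mul_pow]
  exact pow_le_pow_left₀ (by linarith) (by nlinarith) m

lemma sub_pow_le_of_eq_mul_div_one_sub_pow {x ε : ℝ} {m : ℕ} (hx0 : 0 < x) (hx1 : x < 1) (hm : m ≠ 0)
    (hε : ε = x * ((1 - x) ^ m / (1 - (1 - x) ^ m))) :
    0 ≤ ε ∧ ε ≤ 1 - x ∧ (x + ε) * (1 - x - ε) ^ m ≤ ε * (1 + ε) ^ m := by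
  have hq0 : 0 ≤ 1 - x := by linarith
  have ht0 : 0 < (1 - x) ^ m := pow_pos (by linarith) m
  have ht1 : (1 - x) ^ m < 1 := pow_lt_one₀ hq0 (by linarith) hm
  have htq : (1 - x) ^ m ≤ 1 - x := pow_le_of_le_one hq0 (by linarith) hm
  have hε0 : 0 ≤ ε := by
    rw [hε]
    exact mul_nonneg hx0.le (div_nonneg ht0.le (by linarith))
  have hεt := eq_add_mul_of_eq_mul_div_one_sub ht1 hε
  have hεq : ε ≤ 1 - x := by nlinarith
  refine ⟨hε0, hεq, ?_⟩
  calc (x + ε) * (1 - x - ε) ^ m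
      ≤ (x + ε) * ((1 - x) ^ m * (1 + ε) ^ m) :=
        mul_le_mul_of_nonneg_left (sub_pow_le_pow_mul_one_add_pow hq0 hε0 hεq m) (by linarith)
    _ = ε * (1 + ε) ^ m := by rw [← mul_assoc, ← hεt]

lemma le_mul_sub_pow_div_add_pow {g ε : ℝ} (m : ℕ) (hg : g < 1) (hε : 0 ≤ ε)
    (hA : 0 ≤ 1 - 2 * g - ε) (h : (2 * g + ε) * (1 - 2 * g - ε) ^ m ≤ ε * (1 + ε) ^ m) :
    g ≤ (g + ε) * ((1 + ε) ^ m - (1 - 2 * g - ε) ^ m) /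
      ((1 + ε) ^ (m + 1) + (1 - 2 * g - ε) ^ (m + 1)) := by
  rw [le_div_iff₀ (by positivity)]
  have hdiff : (g + ε) * ((1 + ε) ^ m - (1 - 2 * g - ε) ^ m)
      - g * ((1 + ε) ^ (m + 1) + (1 - 2 * g - ε) ^ (m + 1))
      = (1 - g) * (ε * (1 + ε) ^ m - (2 * g + ε) * (1 - 2 * g - ε) ^ m) := by ring
  nlinarith [mul_nonneg (sub_nonneg.2 hg.le) (sub_nonneg.2 h)]

/-- For `k ≥ 2`, `γ₀ ∈ (0,1/2)` and `ε = 2γ₀ (1-2γ₀)^(k-1) / (1 - (1-2γ₀)^(k-1))`,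
there holds `γ(k, (γ₀+ε)/(1-γ₀)) ≥ γ₀`, where
`γ(k,α) = α ((1+α)^(k-1) - (1-α)^(k-1)) / ((1+α)^k + (1-α)^k)`. -/
theorem stmt8 (k : ℕ) (hk : 2 ≤ k) (γ₀ ε : ℝ) (hγ : 0 < γ₀ ∧ γ₀ < 1 / 2)
    (hε : ε = 2 * γ₀ * ((1 - 2 * γ₀) ^ (k - 1) / (1 - (1 - 2 * γ₀) ^ (k - 1)))) :
    γ₀ ≤
      ((γ₀ + ε) / (1 - γ₀)) *
          ((1 + (γ₀ + ε) / (1 - γ₀)) ^ (k - 1) - (1 - (γ₀ + ε) / (1 - γ₀)) ^ (k - 1)) /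
          ((1 + (γ₀ + ε) / (1 - γ₀)) ^ k + (1 - (γ₀ + ε) / (1 - γ₀)) ^ k) := by
  obtain ⟨hγ0, hγ1⟩ := hγ
  obtain ⟨m, rfl⟩ : ∃ m, k = m + 1 := ⟨k - 1, by omega⟩
  rw [Nat.add_sub_cancel] at hε ⊢
  obtain ⟨hε0, hεq, hpow⟩ :=
    sub_pow_le_of_eq_mul_div_one_sub_pow (by linarith : 0 < 2 * γ₀) (by linarith) (by omega) hε
  have hc : 1 - γ₀ ≠ 0 := by linarith
  have h1α : 1 + (γ₀ + ε) / (1 - γ₀) = (1 + ε) / (1 - γ₀) := by field_simp; ring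
  have h2α : 1 - (γ₀ + ε) / (1 - γ₀) = (1 - 2 * γ₀ - ε) / (1 - γ₀) := by field_simp; ring
  rw [h1α, h2α, mul_sub_pow_div_add_pow_div_homogeneous _ _ _ _ _ hc]
  exact le_mul_sub_pow_div_add_pow m (by linarith) hε0 (by linarith) hpow
end

section
/- Define $F(k,\gamma) = \inf_{x > 0}\left[\log_2((1+x)^k + (1-x)^k) - \gamma k\log_2 x\right] - 1$. Then for every integer $k \geq 2$ and $\gamma \in (0,1/2)$: $k h(\gamma) - 1 \leq F(k,\gamma) \leq k h(\gamma) + \log_2(1 + (1-2\gamma)^k) - 1$. -/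
/-!
Everything is done in natural logarithms with `H = Real.binEntropy`. For the lower bound,
concavity of `log` (weighted AM–GM with weights `γ, 1 - γ` at the points `x / γ, 1 / (1 - γ)`)
gives `H(γ) + γ log x ≤ log (1 + x)`, which settles `x ≤ 1` because `(1 - x)^k ≥ 0` there.
For `x ≥ 1`, `H(γ) ≤ log 2` and `γ ≤ 1/2` reduce the claim to
`(2√x)^k ≤ (1 + x)^k - (x - 1)^k`, which follows from `(1 + x)^2 - (x - 1)^2 = 4x`
and `2√x ≤ 1 + x`. The upper bound is the value at `x = γ / (1 - γ)`, the equality case of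
that AM–GM step.
-/

open Real

lemma binEntropy_add_mul_log_le_log_one_add {γ x : ℝ} (hγ₀ : 0 < γ) (hγ₁ : γ < 1) (hx : 0 < x) :
    binEntropy γ + γ * log x ≤ log (1 + x) := by
  have hγ' : 0 < 1 - γ := by linarith
  have key := strictConcaveOn_log_Ioi.concaveOn.2 (Set.mem_Ioi.2 (by positivity : 0 < x * γ⁻¹))
    (Set.mem_Ioi.2 (inv_pos.2 hγ')) hγ₀.le hγ'.le (add_sub_cancel γ 1)
  simp only [smul_eq_mul] at key
  rw [log_mul hx.ne' (inv_ne_zero hγ₀.ne'),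
    show γ * (x * γ⁻¹) + (1 - γ) * (1 - γ)⁻¹ = 1 + x by field_simp; ring] at key
  rw [binEntropy]
  linarith

lemma two_mul_sqrt_pow_le {x : ℝ} (hx : 1 ≤ x) {k : ℕ} (hk : 2 ≤ k) :
    (2 * √x) ^ k ≤ (1 + x) ^ k + (1 - x) ^ k := by
  obtain ⟨m, rfl⟩ := Nat.exists_eq_add_of_le' hk
  have hsqrt : 2 * √x ≤ 1 + x := by
    nlinarith [sq_nonneg (√x - 1), sq_sqrt (zero_le_one.trans hx)]
  have hsub : (x - 1) ^ m ≤ (1 + x) ^ m := pow_le_pow_left₀ (by linarith) (by linarith) m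
  have hneg : -(x - 1) ^ (m + 2) ≤ (1 - x) ^ (m + 2) := by
    rw [← neg_sub x 1, neg_pow]
    rcases neg_one_pow_eq_or ℝ (m + 2) with h | h <;> rw [h] <;>
      nlinarith [pow_nonneg (by linarith : (0:ℝ) ≤ x - 1) (m + 2)]
  calc (2 * √x) ^ (m + 2) = 4 * x * (2 * √x) ^ m := by
        rw [pow_add]
        linear_combination (4 * (2 * √x) ^ m) * sq_sqrt (zero_le_one.trans hx)
    _ ≤ ((1 + x) ^ 2 - (x - 1) ^ 2) * (1 + x) ^ m := by
        rw [show (1 + x) ^ 2 - (x - 1) ^ 2 = 4 * x by ring]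
        gcongr
    _ ≤ (1 + x) ^ (m + 2) - (x - 1) ^ (m + 2) := by
        rw [pow_add, pow_add]
        nlinarith [sq_nonneg (x - 1)]
    _ ≤ (1 + x) ^ (m + 2) + (1 - x) ^ (m + 2) := by linarith

lemma mul_binEntropy_le_log_pow_add_pow_sub {k : ℕ} (hk : 2 ≤ k) {γ x : ℝ} (hγ₀ : 0 < γ)
    (hγ : γ ≤ 1 / 2) (hx : 0 < x) : k * binEntropy γ ≤ log ((1 + x) ^ k + (1 - x) ^ k) - γ * k * log x := by
  obtain ⟨y, hy, hle, hpow⟩ : ∃ y > 0, binEntropy γ + γ * log x ≤ log y ∧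
      y ^ k ≤ (1 + x) ^ k + (1 - x) ^ k := by
    rcases le_total x 1 with hx₁ | hx₁
    · refine ⟨1 + x, by linarith, binEntropy_add_mul_log_le_log_one_add hγ₀ (by linarith) hx, ?_⟩
      exact le_add_of_nonneg_right (pow_nonneg (by linarith) k)
    · refine ⟨2 * √x, by positivity, ?_, two_mul_sqrt_pow_le hx₁ hk⟩
      rw [log_mul two_ne_zero (sqrt_ne_zero'.2 hx), log_sqrt hx.le]
      nlinarith [binEntropy_le_log_two (p := γ), log_nonneg hx₁]
  calc (k : ℝ) * binEntropy γ ≤ k * log y - γ * k * log x := by nlinarith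
    _ = log (y ^ k) - γ * k * log x := by rw [log_pow]
    _ ≤ _ := by gcongr

lemma log_pow_add_pow_sub_mul_log_at_div_one_sub {k : ℕ} {γ : ℝ} (hγ₀ : 0 < γ) (hγ₁ : γ < 1) :
    log ((1 + γ / (1 - γ)) ^ k + (1 - γ / (1 - γ)) ^ k) - γ * k * log (γ / (1 - γ))
      = k * binEntropy γ + log (1 + (1 - 2 * γ) ^ k) := by
  have hγ' : 1 - γ ≠ 0 := by linarith
  have hne : 1 + (1 - 2 * γ) ^ k ≠ 0 := by
    rcases k.eq_zero_or_pos with rfl | hk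
    · norm_num
    · have : |(1 - 2 * γ) ^ k| < 1 := by
        rw [abs_pow]; exact pow_lt_one₀ (abs_nonneg _) (abs_lt.2 ⟨by linarith, by linarith⟩) hk.ne'
      linarith [neg_abs_le ((1 - 2 * γ) ^ k)]
  rw [show 1 + γ / (1 - γ) = 1 / (1 - γ) by field_simp; ring,
    show 1 - γ / (1 - γ) = (1 - 2 * γ) / (1 - γ) by field_simp; ring,
    div_pow, div_pow, one_pow, ← add_div, log_div hne (pow_ne_zero k hγ'), log_pow,
    log_div hγ₀.ne' hγ', binEntropy, log_inv, log_inv]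
  ring

lemma logb_two_binEntropy_eq (γ : ℝ) :
    -(γ * logb 2 γ) - (1 - γ) * logb 2 (1 - γ) = binEntropy γ / log 2 := by
  rw [binEntropy, log_inv, log_inv, logb, logb]
  ring

/-- With `F(k,γ) = inf_{x>0} [log₂((1+x)^k + (1-x)^k) - γ k log₂ x] - 1`,
for every integer `k ≥ 2` and `γ ∈ (0,1/2)`:
`k h(γ) - 1 ≤ F(k,γ) ≤ k h(γ) + log₂(1 + (1-2γ)^k) - 1`. -/
theorem stmt12 (k : ℕ) (hk : 2 ≤ k) (γ : ℝ) (hγ : 0 < γ ∧ γ < 1 / 2)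
    (F : ℝ)
    (hF : F = (⨅ x : Set.Ioi (0 : ℝ),
        (Real.logb 2 ((1 + (x : ℝ)) ^ k + (1 - (x : ℝ)) ^ k)
          - γ * k * Real.logb 2 (x : ℝ))) - 1) :
    (k : ℝ) * (-(γ * Real.logb 2 γ) - (1 - γ) * Real.logb 2 (1 - γ)) - 1 ≤ F
    ∧ F ≤ (k : ℝ) * (-(γ * Real.logb 2 γ) - (1 - γ) * Real.logb 2 (1 - γ))
        + Real.logb 2 (1 + (1 - 2 * γ) ^ k) - 1 := by
  obtain ⟨hγ₀, hγ⟩ := hγ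
  have hlog2 : 0 < log 2 := log_pos one_lt_two
  have hG : ∀ x : ℝ, logb 2 ((1 + x) ^ k + (1 - x) ^ k) - γ * k * logb 2 x
      = (log ((1 + x) ^ k + (1 - x) ^ k) - γ * k * log x) / log 2 := by
    intro x; rw [logb, logb]; ring
  simp only [hG] at hF
  have hlower : ∀ x : Set.Ioi (0 : ℝ), k * (binEntropy γ / log 2)
      ≤ (log ((1 + (x : ℝ)) ^ k + (1 - (x : ℝ)) ^ k) - γ * k * log x) / log 2 := fun x => by
    rw [← mul_div_assoc]
    exact div_le_div_of_nonneg_right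
      (mul_binEntropy_le_log_pow_add_pow_sub hk hγ₀ hγ.le x.2) hlog2.le
  have hratio : γ / (1 - γ) ∈ Set.Ioi (0 : ℝ) := div_pos hγ₀ (by linarith)
  have hupper := ciInf_le ⟨_, Set.forall_mem_range.2 hlower⟩ ⟨_, hratio⟩
  rw [log_pow_add_pow_sub_mul_log_at_div_one_sub hγ₀ (by linarith)] at hupper
  rw [logb_two_binEntropy_eq, hF, logb]
  constructor
  · linarith [le_ciInf hlower]
  · linarith [show (k * binEntropy γ + log (1 + (1 - 2 * γ) ^ k)) / log 2
      = k * (binEntropy γ / log 2) + log (1 + (1 - 2 * γ) ^ k) / log 2 by ring]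
end

section
/- (Maximum likely outcome of multinomial) Let $r \geq 2$, $c > 0$, and $p_1,\ldots,p_r \geq c$ with $\sum p_i = 1$. For $n$ balls dropped independently into $r$ bins with probabilities $p_i$, the probability of any particular outcome $(a_1,\ldots,a_r)$ with $\sum a_i = n$ is at most $C(r,c) \cdot n^{-(r-1)/2}$ for some constant $C(r,c)$ depending only on $r$ and $c$. -/
/-!
By Stirling's formula the probability of `a` is at most `e √n / ∏ᵢ √(2π aᵢ)` times the likelihood
ratio `∏ᵢ (n pᵢ / aᵢ) ^ aᵢ`, and `x ≤ exp (x - 1)` applied to each factor bounds this ratio by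
`exp (n ∑ pᵢ - n) = 1`. If every bin receives at least `c n / 2` balls, the Stirling denominator
is at least `(π c n) ^ (r / 2)`, which gives the bound. Otherwise some bin `j` receives at most
`n pⱼ / 2` balls, and applying the same inequality to `n pⱼ / (2 aⱼ)` instead gains a factor
`2 ^ aⱼ exp (-n pⱼ / 2) ≤ exp (-(1 - log 2) c n / 2)`, which beats every power of `n`.
-/

open Finset Real
open scoped Nat

variable {ι : Type*} [Fintype ι]

theorem factorial_le_exp_one_mul_stirling {n : ℕ} (hn : n ≠ 0) :
    (n ! : ℝ) ≤ exp 1 * √n * (n / exp 1) ^ n := by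
  have hseq : Stirling.stirlingSeq n ≤ exp 1 / √2 := by
    obtain ⟨m, rfl⟩ := Nat.exists_eq_succ_of_ne_zero hn
    simpa using Stirling.stirlingSeq'_antitone (Nat.zero_le m)
  rw [Stirling.stirlingSeq, div_le_iff₀ (by positivity)] at hseq
  calc (n ! : ℝ) ≤ exp 1 / √2 * (√(2 * n) * (n / exp 1) ^ n) := hseq
    _ = exp 1 * √n * (n / exp 1) ^ n := by
      rw [sqrt_mul zero_le_two]; field_simp

theorem div_exp_one_pow_le_factorial (k : ℕ) : ((k : ℝ) / exp 1) ^ k ≤ k ! := by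
  have h := pow_div_factorial_le_exp _ (k.cast_nonneg : (0 : ℝ) ≤ k) k
  rw [div_le_iff₀ (by positivity)] at h
  rw [div_pow, exp_one_pow, div_le_iff₀ (by positivity)]
  linarith

theorem div_pow_le_exp_sub {y : ℝ} (hy : 0 ≤ y) (k : ℕ) : (y / k) ^ k ≤ exp (y - k) := by
  rcases k.eq_zero_or_pos with rfl | hk
  · simpa using one_le_exp hy
  have hk' : (0 : ℝ) < k := by exact_mod_cast hk
  calc (y / k) ^ k ≤ exp (y / k - 1) ^ k :=
        pow_le_pow_left₀ (by positivity) (by linarith [add_one_le_exp (y / k - 1)]) k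
    _ = exp (y - k) := by rw [← exp_nat_mul]; congr 1; field_simp

theorem div_pow_le_exp_sub_of_le_half {y : ℝ} (hy : 0 ≤ y) {k : ℕ} (hk : (k : ℝ) ≤ y / 2) :
    (y / k) ^ k ≤ exp (y - k - (1 - log 2) * y / 2) := by
  calc (y / k) ^ k = exp (k * log 2) * (y / 2 / k) ^ k := by
        rw [exp_nat_mul, exp_log two_pos, ← mul_pow]; congr 1; ring
    _ ≤ exp (y / 2 * log 2) * exp (y / 2 - k) := by
        gcongr ?_ * ?_
        · exact exp_le_exp.2 (mul_le_mul_of_nonneg_right hk (log_nonneg one_le_two))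
        · exact div_pow_le_exp_sub (by positivity) k
    _ = exp (y - k - (1 - log 2) * y / 2) := by rw [← exp_add]; ring_nf

theorem exists_natCast_rpow_mul_exp_neg_le (s : ℝ) {b : ℝ} (hb : 0 < b) :
    ∃ M, ∀ n : ℕ, (n : ℝ) ^ s * exp (-b * n) ≤ M := by
  obtain ⟨M, hM⟩ := ((tendsto_rpow_mul_exp_neg_mul_atTop_nhds_zero s b hb).comp
    tendsto_natCast_atTop_atTop).bddAbove_range
  exact ⟨M, fun n => hM ⟨n, rfl⟩⟩

theorem rpow_div_two_mul_rpow_neg_sub_one_div_two {x : ℝ} (hx : 0 < x) (t : ℝ) :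
    x ^ (t / 2) * x ^ (-((t - 1) / 2)) = √x := by
  rw [sqrt_eq_rpow, ← rpow_add hx]; ring_nf

/-- `∏ (pᵢ / qᵢ) ^ aᵢ` for the empirical distribution `q = a / n`, i.e. `exp (-n KL(q ‖ p))`. -/
noncomputable def likelihoodRatio (p : ι → ℝ) (a : ι → ℕ) : ℝ :=
  ∏ i, ((∑ j, a j : ℕ) * p i / a i) ^ a i

noncomputable def multinomialProb (p : ι → ℝ) (a : ι → ℕ) : ℝ :=
  Nat.multinomial univ a * ∏ i, p i ^ a i

theorem multinomialProb_nonneg {p : ι → ℝ} (hp : ∀ i, 0 ≤ p i) (a : ι → ℕ) :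
    0 ≤ multinomialProb p a :=
  mul_nonneg (by positivity) (prod_nonneg fun i _ => pow_nonneg (hp i) _)

section

variable {p : ι → ℝ} (hp : ∀ i, 0 ≤ p i) {n : ℕ} {a : ι → ℕ} (ha : ∑ i, a i = n)
include hp ha

theorem multinomialProb_mul_prod_le (hn : n ≠ 0) (s : ι → ℝ) (hs : ∀ i, 0 ≤ s i)
    (hsa : ∀ i, s i * ((a i : ℝ) / exp 1) ^ a i ≤ (a i)!) :
    multinomialProb p a * ∏ i, s i ≤ exp 1 * √n * likelihoodRatio p a := by
  set D := ∏ i, ((a i : ℝ) / exp 1) ^ a i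
  have hD : 0 < D := prod_pos fun i _ => by
    rcases (a i).eq_zero_or_pos with h | h
    · simp [h]
    · have : (0 : ℝ) < a i := by exact_mod_cast h
      positivity
  have hspec : (Nat.multinomial univ a : ℝ) * ∏ i, ((a i)! : ℝ) = n ! := by
    rw [← ha, mul_comm]; exact_mod_cast Nat.multinomial_spec univ a
  have hfac : (∏ i, s i) * D ≤ ∏ i, ((a i)! : ℝ) := by
    rw [← prod_mul_distrib]
    exact prod_le_prod (fun i _ => mul_nonneg (hs i) (by positivity)) fun i _ => hsa i
  have hsplit : ((n : ℝ) / exp 1) ^ n * ∏ i, p i ^ a i = likelihoodRatio p a * D := by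
    rw [likelihoodRatio, ← prod_mul_distrib, ← ha, ← prod_pow_eq_pow_sum, ← prod_mul_distrib]
    refine prod_congr rfl fun i _ => ?_
    rcases (a i).eq_zero_or_pos with h | h
    · simp [h]
    · have : (a i : ℝ) ≠ 0 := by positivity
      rw [← mul_pow, ← mul_pow]; congr 1; push_cast; field_simp
  refine le_of_mul_le_mul_right ?_ hD
  calc multinomialProb p a * (∏ i, s i) * D
      ≤ multinomialProb p a * ∏ i, ((a i)! : ℝ) := by
        rw [mul_assoc]; exact mul_le_mul_of_nonneg_left hfac (multinomialProb_nonneg hp a)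
    _ = n ! * ∏ i, p i ^ a i := by rw [multinomialProb, mul_right_comm, hspec]
    _ ≤ exp 1 * √n * (n / exp 1) ^ n * ∏ i, p i ^ a i :=
        mul_le_mul_of_nonneg_right (factorial_le_exp_one_mul_stirling hn)
          (prod_nonneg fun i _ => pow_nonneg (hp i) _)
    _ = exp 1 * √n * likelihoodRatio p a * D := by rw [mul_assoc, hsplit]; ring

theorem likelihoodRatio_le_exp_sum (hp1 : ∑ i, p i = 1) (d : ι → ℝ)
    (hd : ∀ i, ((n : ℝ) * p i / a i) ^ a i ≤ exp (n * p i - a i + d i)) :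
    likelihoodRatio p a ≤ exp (∑ i, d i) := by
  rw [likelihoodRatio, ha]
  calc ∏ i, ((n : ℝ) * p i / a i) ^ a i ≤ ∏ i, exp (n * p i - a i + d i) :=
        prod_le_prod
          (fun i _ => pow_nonneg (div_nonneg (mul_nonneg n.cast_nonneg (hp i)) (by positivity)) _)
          fun i _ => hd i
    _ = exp (∑ i, d i) := by
        rw [← exp_sum, sum_add_distrib, sum_sub_distrib, ← mul_sum, hp1, ← Nat.cast_sum, ha]
        ring_nf

theorem multinomialProb_le_of_forall_le (hp1 : ∑ i, p i = 1) (hn : n ≠ 0) {c : ℝ} (hc : 0 < c)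
    (hbig : ∀ i, c * n / 2 ≤ a i) :
    multinomialProb p a ≤ exp 1 * (π * c) ^ (-(Fintype.card ι / 2 : ℝ)) *
      (n : ℝ) ^ (-((Fintype.card ι - 1) / 2 : ℝ)) := by
  have hn' : (0 : ℝ) < n := by positivity
  have hratio : likelihoodRatio p a ≤ 1 := by
    simpa using likelihoodRatio_le_exp_sum hp ha hp1 0 fun i => by
      simpa using div_pow_le_exp_sub (mul_nonneg n.cast_nonneg (hp i)) (a i)
  have hstirling := multinomialProb_mul_prod_le hp ha hn (fun i => √(2 * π * a i))
    (fun i => sqrt_nonneg _) fun i => Stirling.le_factorial_stirling (a i)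
  have hdenom : √(π * c * n) ^ Fintype.card ι ≤ ∏ i, √(2 * π * a i) := by
    rw [← card_univ, ← prod_const]
    exact prod_le_prod (fun _ _ => sqrt_nonneg _) fun i _ =>
      sqrt_le_sqrt (by nlinarith [hbig i, pi_pos])
  have hsplit : exp 1 * (π * c) ^ (-(Fintype.card ι / 2 : ℝ)) *
      (n : ℝ) ^ (-((Fintype.card ι - 1) / 2 : ℝ)) * √(π * c * n) ^ Fintype.card ι =
      exp 1 * √n := by
    rw [sqrt_eq_rpow, ← rpow_natCast, ← rpow_mul (by positivity), mul_rpow (by positivity) hn'.le,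
      rpow_neg (by positivity), ← rpow_div_two_mul_rpow_neg_sub_one_div_two hn' (Fintype.card ι)]
    field_simp
  refine le_of_mul_le_mul_right ?_ (by positivity : 0 < √(π * c * n) ^ Fintype.card ι)
  calc multinomialProb p a * √(π * c * n) ^ Fintype.card ι
      ≤ multinomialProb p a * ∏ i, √(2 * π * a i) :=
        mul_le_mul_of_nonneg_left hdenom (multinomialProb_nonneg hp a)
    _ ≤ exp 1 * √n * likelihoodRatio p a := hstirling
    _ ≤ exp 1 * √n := mul_le_of_le_one_right (by positivity) hratio
    _ = _ := hsplit.symm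

theorem multinomialProb_le_exp_of_lt (hp1 : ∑ i, p i = 1) (hn : n ≠ 0) {c : ℝ} {j : ι}
    (hcj : c ≤ p j) (hj : (a j : ℝ) < c * n / 2) :
    multinomialProb p a ≤ exp 1 * √n * exp (-((1 - log 2) * c / 2) * n) := by
  classical
  have hlog : 0 ≤ 1 - log 2 := by linarith [log_two_lt_d9]
  have hratio : likelihoodRatio p a ≤ exp (-((1 - log 2) * (n * p j) / 2)) := by
    simpa using likelihoodRatio_le_exp_sum hp ha hp1
      (fun i => if i = j then -((1 - log 2) * (n * p j) / 2) else 0) fun i => by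
        have hy := mul_nonneg n.cast_nonneg (hp i)
        split_ifs with h
        · subst h
          simpa [sub_eq_add_neg] using div_pow_le_exp_sub_of_le_half hy (by nlinarith)
        · simpa using div_pow_le_exp_sub hy (a i)
  have hstirling := multinomialProb_mul_prod_le hp ha hn (fun _ => 1) (fun _ => zero_le_one)
    fun i => by simpa using div_exp_one_pow_le_factorial (a i)
  rw [prod_const_one, mul_one] at hstirling
  calc multinomialProb p a ≤ exp 1 * √n * likelihoodRatio p a := hstirling
    _ ≤ exp 1 * √n * exp (-((1 - log 2) * c / 2) * n) := by
        gcongr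
        refine hratio.trans (exp_le_exp.2 ?_)
        nlinarith [mul_le_mul_of_nonneg_left hcj (mul_nonneg hlog n.cast_nonneg)]

end

theorem stmt15_general (r : ℕ) (c : ℝ) (hc : 0 < c) :
    ∃ C : ℝ, 0 < C ∧
      ∀ p : Fin r → ℝ, (∀ i, c ≤ p i) → (∑ i, p i = 1) →
        ∀ n : ℕ, 1 ≤ n → ∀ a : Fin r → ℕ, (∑ i, a i = n) →
          (Nat.multinomial Finset.univ a : ℝ) * ∏ i, p i ^ a i
            ≤ C * (n : ℝ) ^ (-(((r : ℝ) - 1) / 2)) := by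
  have hβ : 0 < (1 - log 2) * c / 2 := div_pos (mul_pos (by linarith [log_two_lt_d9]) hc) two_pos
  obtain ⟨M, hM⟩ := exists_natCast_rpow_mul_exp_neg_le (r / 2) hβ
  refine ⟨exp 1 * max ((π * c) ^ (-(r / 2 : ℝ))) M,
    mul_pos (exp_pos 1) (lt_max_of_lt_left (rpow_pos_of_pos (mul_pos pi_pos hc) _)), ?_⟩
  intro p hpc hp1 n hn a ha
  show multinomialProb p a ≤ _
  have hp i : 0 ≤ p i := hc.le.trans (hpc i)
  have hn' : n ≠ 0 := by omega
  by_cases hbig : ∀ i, c * n / 2 ≤ a i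
  · calc _ ≤ exp 1 * (π * c) ^ (-(r / 2 : ℝ)) * (n : ℝ) ^ (-((r - 1) / 2 : ℝ)) := by
          simpa using multinomialProb_le_of_forall_le hp ha hp1 hn' hc hbig
      _ ≤ _ := by gcongr; exact le_max_left _ _
  · push Not at hbig
    obtain ⟨j, hj⟩ := hbig
    calc _ ≤ exp 1 * √n * exp (-((1 - log 2) * c / 2) * n) :=
          multinomialProb_le_exp_of_lt hp ha hp1 hn' (hpc j) hj
      _ = exp 1 * ((n : ℝ) ^ (r / 2 : ℝ) * exp (-((1 - log 2) * c / 2) * n)) *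
          (n : ℝ) ^ (-((r - 1) / 2 : ℝ)) := by
          rw [← rpow_div_two_mul_rpow_neg_sub_one_div_two (by positivity : (0 : ℝ) < n)]; ring
      _ ≤ _ := by gcongr; exact (hM n).trans (le_max_right _ _)

/-- Any single outcome of a multinomial experiment (`n` balls into `r` bins with
bin probabilities `p i ≥ c`) has probability at most `C(r,c) · n^{-(r-1)/2}`. -/
theorem stmt15 (r : ℕ) (hr : 2 ≤ r) (c : ℝ) (hc : 0 < c) :
    ∃ C : ℝ, 0 < C ∧
      ∀ p : Fin r → ℝ, (∀ i, c ≤ p i) → (∑ i, p i = 1) →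
        ∀ n : ℕ, 1 ≤ n → ∀ a : Fin r → ℕ, (∑ i, a i = n) →
          (Nat.multinomial Finset.univ a : ℝ) * ∏ i, p i ^ a i
            ≤ C * (n : ℝ) ^ (-(((r : ℝ) - 1) / 2)) :=
  stmt15_general r c hc
end
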